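/- arXiv:1312.2311 — 7 statements merged into one kernel-verified Lean document; each statement's English description precedes it below -/
import Mathlib

section
/- The intersection over all k ∈ ℕ of the k-closures G^(k) equals the topological closure of G in Aut(T). -/
/-!
In a connected, locally finite graph every ball is finite, and every finite set of vertices lies
in some ball. Hence lying in every `k`-closure of `G` means agreeing with an element of `G` on
each finite vertex set, which is exactly membership in the closure for the permutation topology.
-/

open SimpleGraph Set

variable {V : Type*}

/-- The ball of radius `k` about the vertex `v`, with respect to the path metric. -/
def ball (T : SimpleGraph V) (v : V) (k : ℕ) : Set V := {u | T.dist v u ≤ k}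

/-- `g` fixes the vertex set `S` pointwise. -/
def Fixes {T : SimpleGraph V} (g : T ≃g T) (S : Set V) : Prop := ∀ u ∈ S, g u = u

/-- The `k`-closure of a set `S` of automorphisms of `T`: all automorphisms that agree
with some element of `S` on every ball of radius `k`. -/
def kClosure (T : SimpleGraph V) (S : Set (T ≃g T)) (k : ℕ) : Set (T ≃g T) :=
  {x | ∀ v : V, ∃ g ∈ S, ∀ u ∈ _root_.ball T v k, g u = x u}

/-- A (non-empty) subtree of a tree, viewed as a geodesically convex set of vertices. -/
def IsSubtree (T : SimpleGraph V) (Y : Set V) : Prop :=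
  Y.Nonempty ∧ ∀ u ∈ Y, ∀ v ∈ Y, ∀ w : V, T.dist u w + T.dist w v = T.dist u v → w ∈ Y

/-- `G` stabilises the vertex set `Y` (setwise). -/
def Stabilizes {T : SimpleGraph V} (S : Set (T ≃g T)) (Y : Set V) : Prop :=
  ∀ g ∈ S, (fun u => g u) '' Y = Y

/-- The semi-tree `T_{(v,w)}`: the component of `w` after removing the edge pair
`{(v,w),(w,v)}`, i.e. the vertices strictly closer to `w` than to `v`. -/
def semiTree (T : SimpleGraph V) (v w : V) : Set V := {u | T.dist w u < T.dist v u}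

/-- The permutation topology on `Aut(T)`: pointwise convergence on vertices. -/
instance autTopology (T : SimpleGraph V) : TopologicalSpace (T ≃g T) :=
  TopologicalSpace.induced (fun g => (g : V → V))
    (@Pi.topologicalSpace V (fun _ => V) (fun _ => ⊥))

open Filter Topology

lemma ball_succ_subset (T : SimpleGraph V) (v : V) (k : ℕ) :
    _root_.ball T v (k + 1) ⊆ ⋃ w ∈ _root_.ball T v k, insert w (T.neighborSet w) := by
  intro u hu
  by_cases hk : T.dist v u ≤ k
  · exact mem_biUnion hk (mem_insert u _)
  have hdist : T.dist u v = k + 1 := dist_comm.trans (le_antisymm hu (not_le.mp hk))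
  obtain ⟨p, hp⟩ := exists_walk_of_dist_ne_zero (G := T) (u := u) (v := v) (by omega)
  cases p with
  | nil => simp only [Walk.length_nil] at hp; omega
  | cons hadj q =>
    refine mem_biUnion ?_ (mem_insert_of_mem _ hadj.symm)
    calc T.dist v _ = T.dist _ v := dist_comm
      _ ≤ q.length := dist_le q
      _ = k := by simp only [Walk.length_cons] at hp; omega

lemma finite_ball {T : SimpleGraph V} (hT : T.Preconnected)
    (hlf : ∀ v : V, (T.neighborSet v).Finite) (v : V) (k : ℕ) :
    (_root_.ball T v k).Finite := by
  induction k with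
  | zero =>
    -- `dist` is `0` between unreachable vertices, so this needs preconnectedness.
    refine (finite_singleton v).subset fun u hu => ?_
    exact ((hT v u).dist_eq_zero_iff.mp (Nat.le_zero.mp hu)).symm
  | succ k ih =>
    exact (ih.biUnion fun w _ => (hlf w).insert w).subset (ball_succ_subset T v k)

lemma Set.Finite.exists_subset_ball (T : SimpleGraph V) (v : V) {F : Set V} (hF : F.Finite) :
    ∃ k, F ⊆ _root_.ball T v k :=
  ⟨hF.toFinset.sup (T.dist v), fun _ hu =>
    show T.dist v _ ≤ _ from Finset.le_sup (hF.mem_toFinset.mpr hu)⟩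

lemma hasBasis_nhds_autTopology {T : SimpleGraph V} (x : T ≃g T) :
    (𝓝 x).HasBasis Set.Finite (fun F => {y : T ≃g T | ∀ u ∈ F, y u = x u}) := by
  let _ : TopologicalSpace V := ⊥
  have : DiscreteTopology V := ⟨rfl⟩
  rw [nhds_induced, nhds_pi, nhds_discrete]
  exact (hasBasis_pi_pure _).comap _

lemma mem_closure_iff_forall_finite {T : SimpleGraph V} {S : Set (T ≃g T)} {x : T ≃g T} :
    x ∈ closure S ↔ ∀ F : Set V, F.Finite → ∃ g ∈ S, ∀ u ∈ F, g u = x u :=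
  mem_closure_iff_nhds_basis (hasBasis_nhds_autTopology x)

lemma closure_subset_kClosure {T : SimpleGraph V} (hT : T.Preconnected)
    (hlf : ∀ v : V, (T.neighborSet v).Finite) (S : Set (T ≃g T)) (k : ℕ) :
    closure S ⊆ kClosure T S k :=
  fun _ hx v => mem_closure_iff_forall_finite.mp hx _ (finite_ball hT hlf v k)

lemma iInter_kClosure_subset_closure {T : SimpleGraph V} {S : Set (T ≃g T)} (hS : S.Nonempty) :
    ⋂ k : ℕ, kClosure T S k ⊆ closure S := by
  intro x hx
  rw [mem_iInter] at hx
  refine mem_closure_iff_forall_finite.mpr fun F hF => ?_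
  rcases F.eq_empty_or_nonempty with rfl | ⟨v, -⟩
  · obtain ⟨g, hg⟩ := hS
    exact ⟨g, hg, fun _ hu => hu.elim⟩
  obtain ⟨k, hFk⟩ := hF.exists_subset_ball T v
  obtain ⟨g, hg, hgx⟩ := hx k v
  exact ⟨g, hg, fun u hu => hgx u (hFk hu)⟩

/-- the intersection of all the `k`-closures of `G` is the topological
closure of `G` in `Aut(T)`. -/
theorem iInter_kClosure_eq_closure (T : SimpleGraph V) (hT : T.IsTree)
    (hlf : ∀ v : V, (T.neighborSet v).Finite)
    (G : Subgroup (T ≃g T)) :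
    ⋂ k : ℕ, kClosure T (G : Set (T ≃g T)) k = closure (G : Set (T ≃g T)) :=
  (iInter_kClosure_subset_closure ⟨1, G.one_mem⟩).antisymm
    (subset_iInter (closure_subset_kClosure hT.connected.preconnected hlf G))
end

section
/- A group G of automorphisms of a tree T stabilises no proper non-empty subtree of T if and only if for every vertex v the orbit G.v meets every semi-tree of T. -/
open SimpleGraph Set

variable {V : Type*}

/-! If `Y` is a proper invariant subtree and `ab` an edge leaving it, an orbit point of `Y`
inside `T_{(a,b)}` would put `b` on a geodesic between two points of `Y`. Conversely, if the
orbit of `v` misses `T_{(a,b)}`, then the vertices whose whole orbit misses `T_{(a,b)}` form an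
invariant subtree containing `v` but not `b`: it is an intersection of translates of the
complement of `T_{(a,b)}`, which is convex because every walk out of it crosses the edge `ab`. -/

theorem SimpleGraph.Hom.edist_map_le {W : Type*} {G : SimpleGraph V} {G' : SimpleGraph W}
    (f : G →g G') (u v : V) : G'.edist (f u) (f v) ≤ G.edist u v := by
  by_cases h : G.Reachable u v
  · obtain ⟨p, hp⟩ := h.exists_walk_length_eq_edist
    rw [← hp, ← p.length_map f]
    exact edist_le (p.map f)
  · exact edist_eq_top_of_not_reachable h ▸ le_top

theorem SimpleGraph.Iso.dist_map {W : Type*} {G : SimpleGraph V} {G' : SimpleGraph W}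
    (f : G ≃g G') (u v : V) : G'.dist (f u) (f v) = G.dist u v := by
  have h : G'.edist (f u) (f v) = G.edist u v := by
    refine le_antisymm (f.toHom.edist_map_le u v) ?_
    simpa using f.symm.toHom.edist_map_le (f u) (f v)
  simp only [SimpleGraph.dist, h]

def IsGeodesicallyConvex (T : SimpleGraph V) (Y : Set V) : Prop :=
  ∀ u ∈ Y, ∀ v ∈ Y, ∀ w : V, T.dist u w + T.dist w v = T.dist u v → w ∈ Y

section Convexity

variable {T : SimpleGraph V}

theorem IsGeodesicallyConvex.preimage {S : Set V} (hS : IsGeodesicallyConvex T S) (g : T ≃g T) :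
    IsGeodesicallyConvex T (g ⁻¹' S) := fun u hu v hv w hw =>
  hS _ hu _ hv _ (by simpa only [g.dist_map] using hw)

theorem isGeodesicallyConvex_iInter {ι : Sort*} {S : ι → Set V}
    (hS : ∀ i, IsGeodesicallyConvex T (S i)) : IsGeodesicallyConvex T (⋂ i, S i) :=
  fun u hu v hv w hw => mem_iInter.2 fun i => hS i u (mem_iInter.1 hu i) v (mem_iInter.1 hv i) w hw

-- A geodesic leaving and re-entering `S` would cross `e` twice, but geodesics are paths.
theorem isGeodesicallyConvex_of_forall_walk_mem_edges (hT : T.Connected) {S : Set V}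
    {e : Sym2 V} (hS : ∀ x ∈ S, ∀ w ∉ S, ∀ P : T.Walk x w, e ∈ P.edges) :
    IsGeodesicallyConvex T S := by
  intro x hx y hy w hw
  by_contra hwS
  obtain ⟨P, hP⟩ := hT.exists_walk_length_eq_dist x w
  obtain ⟨Q, hQ⟩ := hT.exists_walk_length_eq_dist w y
  have hPQ : (P.append Q).IsPath := (P.append Q).isPath_of_length_eq_dist (by simp [hP, hQ, hw])
  have heQ : e ∈ Q.edges := by simpa using hS y hy w hwS Q.reverse
  have hnodup := hPQ.isTrail.edges_nodup
  rw [Walk.edges_append] at hnodup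
  exact List.disjoint_of_nodup_append hnodup (hS x hx w hwS P) heQ

end Convexity

theorem SimpleGraph.Walk.dist_add_dist_le_length_of_mem_support {T : SimpleGraph V} {u v x : V}
    (P : T.Walk u v) (hx : x ∈ P.support) : T.dist u x + T.dist x v ≤ P.length := by
  classical
  rw [← P.take_spec hx, Walk.length_append]
  exact add_le_add (dist_le _) (dist_le _)

namespace SimpleGraph.IsTree

variable {T : SimpleGraph V} {a b : V}

theorem mem_edges_of_mem_semiTree_of_notMem (hT : T.IsTree) (hab : T.Adj a b) {x w : V}
    (hx : x ∈ semiTree T a b) (hw : w ∉ semiTree T a b) (P : T.Walk x w) :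
    s(a, b) ∈ P.edges := by
  -- The walk `b ⟶ x ⟶ w ⟶ a` crosses the bridge `ab`, but not on either geodesic leg.
  obtain ⟨Q₁, hQ₁⟩ := hT.connected.exists_walk_length_eq_dist b x
  obtain ⟨Q₂, hQ₂⟩ := hT.connected.exists_walk_length_eq_dist w a
  have hbridge := isBridge_iff_forall_walk_mem_edges.1
    (isAcyclic_iff_forall_adj_isBridge.1 hT.isAcyclic hab.symm) (Q₁.append (P.append Q₂))
  have hx : T.dist b x < T.dist a x := hx
  have hw : T.dist a w ≤ T.dist b w := not_lt.1 hw
  have hab₁ : T.dist b a = 1 := dist_eq_one_iff_adj.2 hab.symm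
  simp only [Walk.edges_append, List.mem_append] at hbridge
  rcases hbridge with h₁ | hP | h₂
  · have := Q₁.dist_add_dist_le_length_of_mem_support (Q₁.snd_mem_support_of_mem_edges h₁)
    omega
  · exact Sym2.eq_swap ▸ hP
  · have := Q₂.dist_add_dist_le_length_of_mem_support (Q₂.fst_mem_support_of_mem_edges h₂)
    have hwa : T.dist w a = T.dist a w := dist_comm
    have hwb : T.dist w b = T.dist b w := dist_comm
    omega

theorem isGeodesicallyConvex_compl_semiTree (hT : T.IsTree) (hab : T.Adj a b) :
    IsGeodesicallyConvex T (semiTree T a b)ᶜ :=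
  isGeodesicallyConvex_of_forall_walk_mem_edges hT.connected fun x hx w hw P => by
    simpa using hT.mem_edges_of_mem_semiTree_of_notMem hab (not_not.1 hw) hx P.reverse

end SimpleGraph.IsTree

theorem SimpleGraph.Connected.exists_adj_mem_notMem {T : SimpleGraph V} (hT : T.Connected)
    {Y : Set V} (hY : Y.Nonempty) (hY' : Y ≠ univ) :
    ∃ a b, a ∈ Y ∧ b ∉ Y ∧ T.Adj a b := by
  obtain ⟨y, hy⟩ := hY
  obtain ⟨z, hz⟩ := (ne_univ_iff_exists_notMem Y).1 hY'
  obtain ⟨d, -, hd, hd'⟩ := (hT.preconnected y z).some.exists_boundary_dart Y hy hz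
  exact ⟨d.fst, d.snd, hd, hd', d.adj⟩

theorem IsGeodesicallyConvex.mem_of_adj_of_mem_semiTree {T : SimpleGraph V} (hT : T.Connected)
    {Y : Set V} (hY : IsGeodesicallyConvex T Y) {a b u : V} (ha : a ∈ Y) (hab : T.Adj a b)
    (hu : u ∈ Y) (hub : u ∈ semiTree T a b) : b ∈ Y := by
  refine hY a ha u hu b ?_
  have hub : T.dist b u < T.dist a u := hub
  have hab : T.dist a b = 1 := dist_eq_one_iff_adj.2 hab
  have := hT.dist_triangle (u := a) (v := b) (w := u)
  omega

theorem stabilizes_iInter_preimage {T : SimpleGraph V} (G : Subgroup (T ≃g T)) (S : Set V) :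
    Stabilizes (G : Set (T ≃g T)) (⋂ g : G, (g : T ≃g T) ⁻¹' S) := by
  intro h hh
  ext x
  simp only [mem_image, mem_iInter, mem_preimage, Subtype.forall]
  constructor
  · rintro ⟨y, hy, rfl⟩ g hg
    simpa using hy (g * h) (mul_mem hg hh)
  · intro hx
    refine ⟨h⁻¹ x, fun g hg => ?_, by simp⟩
    simpa using hx (g * h⁻¹) (mul_mem hg (inv_mem hh))

/-- `G` stabilises no proper non-empty subtree of `T` iff every vertex
orbit meets every semi-tree of `T`. -/
theorem no_invariant_subtree_iff_orbits_meet_semiTrees (T : SimpleGraph V)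
    (hT : T.IsTree) (G : Subgroup (T ≃g T)) :
    (¬ ∃ Y : Set V, IsSubtree T Y ∧ Y ≠ Set.univ ∧
        Stabilizes (G : Set (T ≃g T)) Y) ↔
      ∀ v : V, ∀ a b : V, T.Adj a b → ∃ g ∈ G, g v ∈ semiTree T a b := by
  refine ⟨fun hno v a b hab => ?_, ?_⟩
  · by_contra! hv
    set Y := ⋂ g : G, (g : T ≃g T) ⁻¹' (semiTree T a b)ᶜ
    have hbY : b ∉ Y := fun hb => mem_iInter.1 hb 1 <| by
      show T.dist b b < T.dist a b
      simp [dist_eq_one_iff_adj.2 hab]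
    refine hno ⟨Y, ⟨⟨v, mem_iInter.2 fun g => hv g g.2⟩, ?_⟩,
      fun h => hbY (h ▸ mem_univ b), stabilizes_iInter_preimage G _⟩
    exact isGeodesicallyConvex_iInter fun g =>
      (hT.isGeodesicallyConvex_compl_semiTree hab).preimage g
  · rintro H ⟨Y, ⟨hY, hconv⟩, hne, hstab⟩
    obtain ⟨a, b, ha, hb, hab⟩ := hT.connected.exists_adj_mem_notMem hY hne
    obtain ⟨y, hy⟩ := hY
    obtain ⟨g, hg, hgy⟩ := H y a b hab
    exact hb (IsGeodesicallyConvex.mem_of_adj_of_mem_semiTree hT.connected hconv ha hab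
      (hstab g hg ▸ mem_image_of_mem g hy) hgy)
end

section
/- Let G ≤ Aut(T) stabilise no proper non-empty subtree of T. If for some k ∈ ℕ the fixator Fix_G(B(v,k) ∩ B(w,k)) is trivial for every edge (v,w), then G^(k) = G. -/
open SimpleGraph Set

variable {V : Type*}

/-
The local agreements are glued by triviality of the edge fixators. If `x ∈ G^(k)` is matched
on `B(v,k)` by `g_v ∈ G`, then for an edge `(v,w)` the element `g_w⁻¹ g_v ∈ G` fixes
`B(v,k) ∩ B(w,k)`, hence `g_v = g_w`. Since `T` is connected, all `g_v` are one element of `G`,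
which agrees with `x` on every ball, i.e. equals `x`.
-/

theorem SimpleGraph.Preconnected.apply_eq_of_forall_adj {β : Type*} {T : SimpleGraph V}
    (hT : T.Preconnected) {f : V → β} (hf : ∀ v w, T.Adj v w → f v = f w) (v w : V) :
    f v = f w := by
  obtain ⟨p⟩ := hT v w
  induction p with
  | nil => rfl
  | cons hadj _ ih => exact (hf _ _ hadj).trans ih

section Closure

variable {T : SimpleGraph V}

theorem eq_of_eqOn_of_fixator_trivial {G : Subgroup (T ≃g T)} {S : Set V}
    (htriv : ∀ g ∈ G, (∀ u ∈ S, g u = u) → g = 1) {g h : T ≃g T} (hg : g ∈ G) (hh : h ∈ G)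
    (hgh : EqOn g h S) : g = h := by
  have hfix : ∀ u ∈ S, (h⁻¹ * g) u = u := fun u hu =>
    show h.symm (g u) = u by rw [hgh hu]; exact h.symm_apply_apply u
  exact (inv_mul_eq_one.mp (htriv _ (mul_mem (inv_mem hh) hg) hfix)).symm

theorem subset_kClosure (S : Set (T ≃g T)) (k : ℕ) : S ⊆ kClosure T S k :=
  fun x hx _ => ⟨x, hx, fun _ _ => rfl⟩

theorem kClosure_subset_of_trivial_fixators (hT : T.Preconnected) (G : Subgroup (T ≃g T))
    (k : ℕ) (htriv : ∀ v w : V, T.Adj v w → ∀ g ∈ G,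
        (∀ u ∈ _root_.ball T v k ∩ _root_.ball T w k, g u = u) → g = 1) :
    kClosure T (G : Set (T ≃g T)) k ⊆ G := by
  intro x hx
  choose g hgG hg using hx
  have hadj : ∀ v w, T.Adj v w → g v = g w := fun v w hvw =>
    eq_of_eqOn_of_fixator_trivial (htriv v w hvw) (hgG v) (hgG w)
      fun u hu => (hg v u hu.1).trans (hg w u hu.2).symm
  by_cases hV : Nonempty V
  · obtain ⟨v₀⟩ := hV
    have hx : g v₀ = x := RelIso.ext fun u => by
      rw [hT.apply_eq_of_forall_adj hadj v₀ u]
      exact hg u u (by simp [_root_.ball])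
    exact hx ▸ hgG v₀
  · have hx : x = 1 := RelIso.ext fun u => (hV ⟨u⟩).elim
    exact hx ▸ G.one_mem

end Closure

theorem kClosure_eq_of_trivial_fixators_general (T : SimpleGraph V) (hT : T.IsTree)
    (G : Subgroup (T ≃g T)) (k : ℕ)
    (htriv : ∀ v w : V, T.Adj v w → ∀ g ∈ G,
        (∀ u ∈ _root_.ball T v k ∩ _root_.ball T w k, g u = u) → g = 1) :
    kClosure T (G : Set (T ≃g T)) k = (G : Set (T ≃g T)) :=
  (kClosure_subset_of_trivial_fixators hT.connected.preconnected G k htriv).antisymm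
    (subset_kClosure _ k)

/-- if `G` stabilises no proper non-empty subtree and all the fixators
`Fix_G(B(v,k) ∩ B(w,k))` (over edges `(v,w)`) are trivial, then `G^(k) = G`. -/
theorem kClosure_eq_of_trivial_fixators (T : SimpleGraph V) (hT : T.IsTree)
    (hlf : ∀ v : V, (T.neighborSet v).Finite)
    (G : Subgroup (T ≃g T)) (k : ℕ)
    (hmin : ¬ ∃ Y : Set V, IsSubtree T Y ∧ Y ≠ Set.univ ∧
        Stabilizes (G : Set (T ≃g T)) Y)
    (htriv : ∀ v w : V, T.Adj v w → ∀ g ∈ G,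
        (∀ u ∈ _root_.ball T v k ∩ _root_.ball T w k, g u = u) → g = 1) :
    kClosure T (G : Set (T ≃g T)) k = (G : Set (T ≃g T)) :=
  kClosure_eq_of_trivial_fixators_general T hT G k htriv
end

section
/- Suppose G, H ≤ Aut(T) satisfy: (i) for all vertices v, the restrictions of stab_G(v) and stab_H(v) to B(v,k) coincide; and (ii) G, H and G ∩ H all have the same vertex orbits on T. Then G^(k) = H^(k). -/
open SimpleGraph Set

variable {V : Type*}

/-- The restriction of `stab_A(v)` to `B(v,k)`, encoded as the maps `V → V` that agree on the ball
with an element of the stabiliser. -/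
def localAction (T : SimpleGraph V) (A : Subgroup (T ≃g T)) (v : V) (k : ℕ) : Set (V → V) :=
  {f | ∃ g ∈ A, g v = v ∧ ∀ u ∈ _root_.ball T v k, g u = f u}

/- If `x` agrees with `g ∈ A` on `B(v,k)`, choose `y ∈ A ⊓ B` with `y v = g v`; then `y⁻¹ * g`
lies in the stabiliser of `v` in `A`, so its local action is realised by some `h ∈ B` fixing `v`,
and `y * h ∈ B` agrees with `x` on `B(v,k)`. -/
theorem kClosure_subset_kClosure {T : SimpleGraph V} {A B : Subgroup (T ≃g T)} {k : ℕ}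
    (hloc : ∀ v, localAction T A v k ⊆ localAction T B v k)
    (horb : ∀ v, ∀ g ∈ A, ∃ y ∈ A ⊓ B, y v = g v) :
    kClosure T (A : Set (T ≃g T)) k ⊆ kClosure T (B : Set (T ≃g T)) k := by
  intro x hx v
  obtain ⟨g, hgA, hgx⟩ := hx v
  obtain ⟨y, ⟨hyA, hyB⟩, hyg⟩ := horb v g hgA
  have hfix : (y⁻¹ * g) v = v := by
    rw [RelIso.mul_apply, ← hyg, RelIso.inv_apply_self]
  have hstab : ⇑(y⁻¹ * g) ∈ localAction T A v k :=
    ⟨y⁻¹ * g, mul_mem (inv_mem hyA) hgA, hfix, fun _ _ => rfl⟩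
  obtain ⟨h, hhB, -, hh⟩ := hloc v hstab
  refine ⟨y * h, mul_mem hyB hhB, fun u hu => ?_⟩
  rw [RelIso.mul_apply, hh u hu, RelIso.mul_apply, RelIso.apply_inv_self, hgx u hu]

theorem exists_mem_inf_apply_eq_of_orbit_eq {T : SimpleGraph V} {A B C : Subgroup (T ≃g T)}
    {v : V} (horb : {u : V | ∃ g ∈ C, g v = u} = {u : V | ∃ x : T ≃g T, x ∈ A ∧ x ∈ B ∧ x v = u})
    {g : T ≃g T} (hg : g ∈ C) : ∃ y ∈ A ⊓ B, y v = g v := by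
  obtain ⟨y, hyA, hyB, hy⟩ := horb.subset ⟨g, hg, rfl⟩
  exact ⟨y, ⟨hyA, hyB⟩, hy⟩

theorem kClosure_eq_of_same_local_action_and_orbits_general (T : SimpleGraph V)
    (G H : Subgroup (T ≃g T)) (k : ℕ)
    (hloc : ∀ v : V,
      {f : V → V | ∃ g ∈ G, g v = v ∧ ∀ u ∈ _root_.ball T v k, g u = f u} =
        {f : V → V | ∃ h ∈ H, h v = v ∧ ∀ u ∈ _root_.ball T v k, h u = f u})
    (horbG : ∀ v : V, {u : V | ∃ g ∈ G, g v = u} =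
        {u : V | ∃ x : T ≃g T, x ∈ G ∧ x ∈ H ∧ x v = u})
    (horbH : ∀ v : V, {u : V | ∃ h ∈ H, h v = u} =
        {u : V | ∃ x : T ≃g T, x ∈ G ∧ x ∈ H ∧ x v = u}) :
    kClosure T (G : Set (T ≃g T)) k = kClosure T (H : Set (T ≃g T)) k := by
  refine (kClosure_subset_kClosure (fun v => (hloc v).subset)
    fun v _ hg => exists_mem_inf_apply_eq_of_orbit_eq (horbG v) hg).antisymm
    (kClosure_subset_kClosure (fun v => (hloc v).superset) fun v _ hh => ?_)
  rw [inf_comm]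
  exact exists_mem_inf_apply_eq_of_orbit_eq (horbH v) hh

/-- if `G` and `H` have the same local actions on `k`-balls at every
vertex, and `G`, `H` and `G ∩ H` have the same vertex orbits, then `G^(k) = H^(k)`. -/
theorem kClosure_eq_of_same_local_action_and_orbits (T : SimpleGraph V) (hT : T.IsTree)
    (hlf : ∀ v : V, (T.neighborSet v).Finite)
    (G H : Subgroup (T ≃g T)) (k : ℕ)
    (hloc : ∀ v : V,
      {f : V → V | ∃ g ∈ G, g v = v ∧ ∀ u ∈ _root_.ball T v k, g u = f u} =
        {f : V → V | ∃ h ∈ H, h v = v ∧ ∀ u ∈ _root_.ball T v k, h u = f u})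
    (horbG : ∀ v : V, {u : V | ∃ g ∈ G, g v = u} =
        {u : V | ∃ x : T ≃g T, x ∈ G ∧ x ∈ H ∧ x v = u})
    (horbH : ∀ v : V, {u : V | ∃ h ∈ H, h v = u} =
        {u : V | ∃ x : T ≃g T, x ∈ G ∧ x ∈ H ∧ x v = u}) :
    kClosure T (G : Set (T ≃g T)) k = kClosure T (H : Set (T ≃g T)) k :=
  kClosure_eq_of_same_local_action_and_orbits_general T G H k hloc horbG horbH
end

section
/- If G ≤ Aut(T) satisfies Property IP_k, then G satisfies Property IP_{k+1}. -/
open SimpleGraph Set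

variable {V : Type*}

/-- Property `IP_k` for a set `S` of automorphisms of `T`: for every edge `(v,w)`, every
element of the pointwise fixator of `B(v,k) ∩ B(w,k)` in `S` decomposes as a product of
two such elements, the first fixing the semi-tree `T_{(v,w)}` pointwise and the second
fixing `T_{(w,v)}` pointwise. -/
def PropertyIPk (T : SimpleGraph V) (S : Set (T ≃g T)) (k : ℕ) : Prop :=
  ∀ v w : V, T.Adj v w → ∀ f ∈ S, Fixes f (_root_.ball T v k ∩ _root_.ball T w k) →
    ∃ f₁ ∈ S, ∃ f₂ ∈ S,
      Fixes f₁ (_root_.ball T v k ∩ _root_.ball T w k) ∧ Fixes f₂ (_root_.ball T v k ∩ _root_.ball T w k) ∧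
      Fixes f₁ (semiTree T v w) ∧ Fixes f₂ (semiTree T w v) ∧ f = f₁ * f₂

/-!
Decompose `f` with `IP_k` as `f = f₁ * f₂`, with `f₁` fixing `T_{(v,w)}` and `f₂` fixing
`T_{(w,v)}`. In a tree every vertex lies in one of these two semi-trees, so at a vertex fixed by
`f` one factor is known to act trivially, and `f = f₁ * f₂` forces the other to act trivially
too. Hence both factors fix `B(v,k+1) ∩ B(w,k+1)`, which is all that `IP_{k+1}` asks beyond `IP_k`.
-/

lemma ball_mono (T : SimpleGraph V) (v : V) {k l : ℕ} (hkl : k ≤ l) :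
    _root_.ball T v k ⊆ _root_.ball T v l :=
  fun _ hu => le_trans hu hkl

lemma mem_semiTree_or_mem_semiTree {T : SimpleGraph V} (hT : T.IsTree) {v w : V}
    (hadj : T.Adj v w) (u : V) : u ∈ semiTree T v w ∨ u ∈ semiTree T w v := by
  change T.dist w u < T.dist v u ∨ T.dist v u < T.dist w u
  rw [T.dist_comm (u := w), T.dist_comm (u := v)]
  exact (hT.dist_ne_of_adj u hadj).symm.lt_or_gt

lemma Fixes.mono {T : SimpleGraph V} {g : T ≃g T} {S S' : Set V} (hg : Fixes g S)
    (hS : S' ⊆ S) : Fixes g S' :=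
  fun u hu => hg u (hS hu)

lemma fixes_and_fixes_of_fixes_mul {T : SimpleGraph V} {f₁ f₂ : T ≃g T} {S A B : Set V}
    (hf : Fixes (f₁ * f₂) S) (h₁ : Fixes f₁ A) (h₂ : Fixes f₂ B) (hS : S ⊆ A ∪ B) :
    Fixes f₁ S ∧ Fixes f₂ S := by
  have hmul : ∀ u ∈ S, f₁ (f₂ u) = u := hf
  refine ⟨fun u hu => ?_, fun u hu => ?_⟩ <;> rcases hS hu with hA | hB
  · exact h₁ u hA
  · simpa only [h₂ u hB] using hmul u hu
  · exact f₁.injective (by rw [hmul u hu, h₁ u hA])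
  · exact h₂ u hB

theorem propertyIPk_succ_general (T : SimpleGraph V) (hT : T.IsTree)
    (G : Subgroup (T ≃g T)) (k : ℕ)
    (h : PropertyIPk T (G : Set (T ≃g T)) k) :
    PropertyIPk T (G : Set (T ≃g T)) (k + 1) := by
  intro v w hadj f hfG hfFix
  have hball : _root_.ball T v k ∩ _root_.ball T w k ⊆
      _root_.ball T v (k + 1) ∩ _root_.ball T w (k + 1) :=
    inter_subset_inter (ball_mono T v k.le_succ) (ball_mono T w k.le_succ)
  obtain ⟨f₁, hf₁G, f₂, hf₂G, -, -, hsemi₁, hsemi₂, rfl⟩ := h v w hadj f hfG (hfFix.mono hball)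
  obtain ⟨hfix₁, hfix₂⟩ := fixes_and_fixes_of_fixes_mul hfFix hsemi₁ hsemi₂
    fun u _ => mem_semiTree_or_mem_semiTree hT hadj u
  exact ⟨f₁, hf₁G, f₂, hf₂G, hfix₁, hfix₂, hsemi₁, hsemi₂, rfl⟩

/-- Property `IP_k` implies Property `IP_{k+1}`. -/
theorem propertyIPk_succ (T : SimpleGraph V) (hT : T.IsTree)
    (hlf : ∀ v : V, (T.neighborSet v).Finite)
    (G : Subgroup (T ≃g T)) (k : ℕ)
    (h : PropertyIPk T (G : Set (T ≃g T)) k) :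
    PropertyIPk T (G : Set (T ≃g T)) (k + 1) :=
  propertyIPk_succ_general T hT G k h
end

section
/- If G ≤ Aut(T) satisfies Property IP_k, then G^(k) equals the topological closure of G in Aut(T). -/
open SimpleGraph Set

variable {V : Type*}

/-! The `k`-closure is closed because balls in a locally finite tree are finite, and it contains
`G`. Conversely, given `x ∈ G^(k)`, we find elements of `G` agreeing with `x` on the
`k`-neighbourhood of ever larger balls `B(v₀, n)`, adding the vertices `w` of the next sphere
one at a time. If `g ∈ G` agrees with `x` near the part already built and `g_w ∈ G` agrees
with `x` on `B(w, k)`, then `g_w⁻¹ g` fixes `B(v, k) ∩ B(w, k)` for the neighbour `v` of `w`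
closer to `v₀`, and `IP_k` splits it across the edge `vw` into an element of `G` that agrees
with `g` on the `v`-side and with `g_w` on the `w`-side. -/

variable {T : SimpleGraph V}

namespace SimpleGraph

theorem Connected.exists_adj_dist_eq_of_dist_eq_add_one (hconn : T.Connected) {a t : V} {n : ℕ}
    (h : T.dist a t = n + 1) : ∃ s, T.Adj s t ∧ T.dist a s = n := by
  obtain ⟨p, hp⟩ := hconn.exists_walk_length_eq_dist a t
  have hnil : ¬p.Nil := by rw [← Walk.length_eq_zero_iff]; omega
  refine ⟨p.penultimate, p.adj_penultimate hnil, ?_⟩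
  have hle : T.dist a p.penultimate ≤ p.length - 1 := p.length_dropLast ▸ dist_le p.dropLast
  have hge : T.dist a t ≤ T.dist a p.penultimate + T.dist p.penultimate t := hconn.dist_triangle
  rw [dist_eq_one_iff_adj.mpr (p.adj_penultimate hnil)] at hge
  omega

theorem Connected.finite_ball (hconn : T.Connected) (hlf : ∀ v : V, (T.neighborSet v).Finite)
    (v : V) (n : ℕ) : (_root_.ball T v n).Finite := by
  induction n with
  | zero =>
    refine (finite_singleton v).subset fun u hu => ?_
    exact (hconn.dist_eq_zero_iff.mp (Nat.le_zero.mp hu)).symm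
  | succ n ih =>
    refine (ih.union (ih.biUnion fun u _ => hlf u)).subset fun t ht => ?_
    rcases Nat.lt_or_eq_of_le (show T.dist v t ≤ n + 1 from ht) with hlt | heq
    · exact Or.inl (Nat.lt_succ_iff.mp hlt)
    · obtain ⟨s, hst, hs⟩ := hconn.exists_adj_dist_eq_of_dist_eq_add_one heq
      exact Or.inr (mem_biUnion (show s ∈ _root_.ball T v n from hs.le) hst)

theorem IsTree.eq_of_adj_of_dist_add_one_eq (hT : T.IsTree) {y x s t : V} (hs : T.Adj s x)
    (ht : T.Adj t x) (hds : T.dist y s + 1 = T.dist y x) (hdt : T.dist y t + 1 = T.dist y x) :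
    s = t := by
  obtain ⟨p, -, hp⟩ := hT.connected.exists_path_of_dist y s
  obtain ⟨q, -, hq⟩ := hT.connected.exists_path_of_dist y t
  have hps : (p.concat hs).IsPath := (p.concat hs).isPath_of_length_eq_dist (by simp [hp, hds])
  have hqt : (q.concat ht).IsPath := (q.concat ht).isPath_of_length_eq_dist (by simp [hq, hdt])
  have hpq := (hT.isAcyclic.subsingleton_path y x).elim ⟨_, hps⟩ ⟨_, hqt⟩
  exact (Walk.concat_inj (Subtype.ext_iff.mp hpq)).1

theorem IsTree.mem_semiTree_or (hT : T.IsTree) {v w : V} (hvw : T.Adj v w) (u : V) :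
    u ∈ semiTree T v w ∨ u ∈ semiTree T w v := by
  have := hT.dist_ne_of_adj u hvw
  rw [dist_comm, dist_comm (u := u)] at this
  simp only [semiTree, mem_ofPred_eq]
  omega

theorem IsTree.dist_eq_add_one_of_mem_semiTree (hT : T.IsTree) {v w u : V} (hvw : T.Adj v w)
    (hu : u ∈ semiTree T v w) : T.dist v u = T.dist w u + 1 := by
  have := hT.dist_eq_dist_add_one_of_adj u hvw
  rw [dist_comm, dist_comm (u := u)] at this
  simp only [semiTree, mem_ofPred_eq] at hu
  omega

theorem IsTree.dist_eq_of_mem_semiTree (hT : T.IsTree) {v w y u : V} (hvw : T.Adj v w)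
    (hy : y ∈ semiTree T w v) (hu : u ∈ semiTree T v w) :
    T.dist y u = T.dist y v + 1 + T.dist w u := by
  obtain ⟨m, hm⟩ : ∃ m, T.dist w u = m := ⟨_, rfl⟩
  induction m generalizing u with
  | zero =>
    obtain rfl := hT.connected.dist_eq_zero_iff.mp hm
    have := hT.dist_eq_add_one_of_mem_semiTree hvw.symm hy
    rw [dist_self, dist_comm (u := y), dist_comm (u := y)]
    omega
  | succ m ih =>
    obtain ⟨u', hu'u, hwu'⟩ := hT.connected.exists_adj_dist_eq_of_dist_eq_add_one hm
    have hvu := hT.dist_eq_add_one_of_mem_semiTree hvw hu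
    have hvu' : T.dist v u ≤ T.dist v u' + T.dist u' u := hT.connected.dist_triangle
    rw [dist_eq_one_iff_adj.mpr hu'u] at hvu'
    have hu' : u' ∈ semiTree T v w := by simp only [semiTree, mem_ofPred_eq]; omega
    have hyu' := ih hu' hwu'
    rcases hT.dist_eq_dist_add_one_of_adj y hu'u with hyu | hyu
    · -- `u` would be the neighbour of `u'` towards `y`, but so is the one towards `v`.
      exfalso
      have hvu'' := hT.dist_eq_add_one_of_mem_semiTree hvw hu'
      obtain ⟨t, htu', hvt⟩ := hT.connected.exists_adj_dist_eq_of_dist_eq_add_one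
        (hvu''.trans (congrArg (· + 1) hwu'))
      have hyt : T.dist y t ≤ T.dist y v + T.dist v t := hT.connected.dist_triangle
      have hyt' : T.dist y u' ≤ T.dist y t + T.dist t u' := hT.connected.dist_triangle
      rw [dist_eq_one_iff_adj.mpr htu'] at hyt'
      obtain rfl := hT.eq_of_adj_of_dist_add_one_eq htu' hu'u.symm (by omega) hyu.symm
      omega
    · omega

theorem IsTree.ball_union_subset_semiTree (hT : T.IsTree) {v₀ v w : V} {n : ℕ}
    (hvw : T.Adj v w) (hv : T.dist v₀ v = n) (hw : T.dist v₀ w = n + 1) {t : Set V}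
    (ht : t ⊆ {u | T.dist v₀ u = n + 1}) (hwt : w ∉ t) :
    _root_.ball T v₀ n ∪ t ⊆ semiTree T w v := by
  have hv₀ : v₀ ∈ semiTree T w v := by
    simp only [semiTree, mem_ofPred_eq, dist_comm (u := v), dist_comm (u := w)]
    omega
  intro y hy
  refine (hT.mem_semiTree_or hvw y).resolve_left fun hy' => ?_
  have hcross := hT.dist_eq_of_mem_semiTree hvw hv₀ hy'
  rcases hy with hy | hy
  · exact absurd hy (show ¬T.dist v₀ y ≤ n by omega)
  · have hwy : T.dist w y = 0 := by have := ht hy; simp only [mem_ofPred_eq] at this; omega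
    exact hwt (hT.connected.dist_eq_zero_iff.mp hwy ▸ hy)

end SimpleGraph

open SimpleGraph

section Extension

variable {G : Subgroup (T ≃g T)} {k : ℕ} {x : T ≃g T}

theorem PropertyIPk.exists_eqOn_semiTree (h : PropertyIPk T (G : Set (T ≃g T)) k) {v w : V}
    (hvw : T.Adj v w) {g g' : T ≃g T}
    (hg : g ∈ G) (hg' : g' ∈ G) (hgg' : EqOn g g' (_root_.ball T v k ∩ _root_.ball T w k)) :
    ∃ g'' ∈ G, EqOn g'' g (semiTree T v w) ∧ EqOn g'' g' (semiTree T w v) := by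
  have hfix : Fixes (g⁻¹ * g') (_root_.ball T v k ∩ _root_.ball T w k) := fun u hu => by
    simp [RelIso.mul_apply, ← hgg' hu]
  obtain ⟨f₁, hf₁, f₂, -, -, -, hf₁v, hf₂w, hf⟩ :=
    h v w hvw _ (mul_mem (inv_mem hg) hg') hfix
  refine ⟨g * f₁, mul_mem hg hf₁, fun u hu => ?_, fun u hu => ?_⟩
  · simp [RelIso.mul_apply, hf₁v u hu]
  · have : f₁ u = (g⁻¹ * g') u := by rw [hf, RelIso.mul_apply, hf₂w u hu]
    simp [RelIso.mul_apply, this]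

theorem exists_eqOn_iUnion_ball_insert (hT : T.IsTree)
    (h : PropertyIPk T (G : Set (T ≃g T)) k) (hx : x ∈ kClosure T G k)
    {Y : Set V} {v w : V} (hvw : T.Adj v w) (hv : v ∈ Y) (hY : Y ⊆ semiTree T w v)
    {g : T ≃g T} (hg : g ∈ G) (hgx : EqOn g x (⋃ y ∈ Y, _root_.ball T y k)) :
    ∃ g' ∈ G, EqOn g' x (⋃ y ∈ insert w Y, _root_.ball T y k) := by
  obtain ⟨gw, hgw, hgwx⟩ : ∃ gw ∈ G, EqOn gw x (_root_.ball T w k) := hx w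
  have hvY : _root_.ball T v k ⊆ ⋃ y ∈ Y, _root_.ball T y k :=
    subset_biUnion_of_mem (u := fun y => _root_.ball T y k) hv
  obtain ⟨g', hg', hg'w, hg'v⟩ :=
    h.exists_eqOn_semiTree hvw hgw hg fun u hu => (hgwx hu.2).trans (hgx (hvY hu.1)).symm
  refine ⟨g', hg', fun u hu => ?_⟩
  rw [biUnion_insert] at hu
  rcases hT.mem_semiTree_or hvw u with hu' | hu'
  · rw [hg'w hu']
    refine hgwx ?_
    rcases hu with hu | hu
    · exact hu
    · obtain ⟨y, hy, hyu⟩ := mem_iUnion₂.mp hu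
      have := hT.dist_eq_of_mem_semiTree hvw (hY hy) hu'
      exact show T.dist w u ≤ k from le_trans (by omega) hyu
  · rw [hg'v hu']
    refine hgx ?_
    rcases hu with hu | hu
    · exact hvY (show T.dist v u ≤ k from (lt_of_lt_of_le hu' hu).le)
    · exact hu

theorem exists_eqOn_iUnion_ball_succ (hT : T.IsTree) (hlf : ∀ v : V, (T.neighborSet v).Finite)
    (h : PropertyIPk T (G : Set (T ≃g T)) k) (hx : x ∈ kClosure T G k) {v₀ : V} {n : ℕ}
    {g : T ≃g T} (hg : g ∈ G)
    (hgx : EqOn g x (⋃ y ∈ _root_.ball T v₀ n, _root_.ball T y k)) :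
    ∃ g' ∈ G, EqOn g' x (⋃ y ∈ _root_.ball T v₀ (n + 1), _root_.ball T y k) := by
  set S : Set V := {u | T.dist v₀ u = n + 1}
  have hS : S.Finite := (hT.connected.finite_ball hlf v₀ (n + 1)).subset fun u hu => hu.le
  suffices ∀ t ⊆ S,
      ∃ g' ∈ G, EqOn g' x (⋃ y ∈ _root_.ball T v₀ n ∪ t, _root_.ball T y k) by
    obtain ⟨g', hg', hg'x⟩ := this S subset_rfl
    refine ⟨g', hg', hg'x.mono (biUnion_subset_biUnion_left fun u hu => ?_)⟩
    exact (Nat.lt_or_eq_of_le hu).imp Nat.lt_succ_iff.mp id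
  intro t ht
  induction t, hS.subset ht using Set.Finite.induction_on with
  | empty => exact ⟨g, hg, by simpa using hgx⟩
  | @insert w t hwt _ ih =>
    obtain ⟨g₁, hg₁, hg₁x⟩ := ih ((subset_insert w t).trans ht)
    have hw : T.dist v₀ w = n + 1 := ht (mem_insert w t)
    obtain ⟨v, hvw, hv⟩ := hT.connected.exists_adj_dist_eq_of_dist_eq_add_one hw
    have hY := hT.ball_union_subset_semiTree hvw hv hw ((subset_insert w t).trans ht) hwt
    rw [union_insert]
    exact exists_eqOn_iUnion_ball_insert hT h hx hvw (Or.inl hv.le) hY hg₁ hg₁x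

theorem exists_eqOn_iUnion_ball (hT : T.IsTree) (hlf : ∀ v : V, (T.neighborSet v).Finite)
    (h : PropertyIPk T (G : Set (T ≃g T)) k) (hx : x ∈ kClosure T G k) (v₀ : V) (n : ℕ) :
    ∃ g ∈ G, EqOn g x (⋃ y ∈ _root_.ball T v₀ n, _root_.ball T y k) := by
  induction n with
  | zero =>
    obtain ⟨g, hg, hgx⟩ := hx v₀
    refine ⟨g, hg, fun u hu => hgx u ?_⟩
    obtain ⟨y, hy, hyu⟩ := mem_iUnion₂.mp hu
    rwa [← hT.connected.dist_eq_zero_iff.mp (Nat.le_zero.mp hy)] at hyu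
  | succ n ih =>
    obtain ⟨g, hg, hgx⟩ := ih
    exact exists_eqOn_iUnion_ball_succ hT hlf h hx hg hgx

end Extension

theorem mem_closure_iff_forall_finite_exists_eqOn {S : Set (T ≃g T)} {x : T ≃g T} :
    x ∈ closure S ↔ ∀ F : Set V, F.Finite → ∃ g ∈ S, EqOn g x F := by
  let _ : TopologicalSpace V := ⊥
  have _ : DiscreteTopology V := ⟨rfl⟩
  have hbasis := (Filter.hasBasis_pi fun u => Filter.hasBasis_pure (x u)).comap
    (fun g : T ≃g T => (g : V → V))
  rw [← nhds_discrete] at hbasis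
  rw [mem_closure_iff_nhds_basis (by simpa [nhds_induced, nhds_pi] using hbasis)]
  simp [EqOn]

/-- if `G` satisfies Property `IP_k` then its `k`-closure equals its
topological closure in `Aut(T)`. -/
theorem kClosure_eq_closure_of_propertyIPk (T : SimpleGraph V) (hT : T.IsTree)
    (hlf : ∀ v : V, (T.neighborSet v).Finite)
    (G : Subgroup (T ≃g T)) (k : ℕ)
    (h : PropertyIPk T (G : Set (T ≃g T)) k) :
    kClosure T (G : Set (T ≃g T)) k = closure (G : Set (T ≃g T)) := by
  ext x
  rw [mem_closure_iff_forall_finite_exists_eqOn]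
  constructor
  · intro hx F hF
    obtain ⟨v₀⟩ := hT.connected.nonempty
    obtain ⟨n, hn⟩ := (hF.image (T.dist v₀)).bddAbove
    obtain ⟨g, hg, hgx⟩ := exists_eqOn_iUnion_ball hT hlf h hx v₀ n
    have hself (u : V) : u ∈ _root_.ball T u k := (dist_self (G := T) (v := u)).trans_le k.zero_le
    exact ⟨g, hg, hgx.mono fun u hu => mem_biUnion
      (show u ∈ _root_.ball T v₀ n from hn (mem_image_of_mem _ hu)) (hself u)⟩
  · intro hx v
    exact hx _ (hT.connected.finite_ball hlf v k)
end

section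
/- Let G ≤ Aut(T) be closed, satisfying Property P_k, let h ∈ G induce a non-trivial translation along a doubly-infinite path C, and let K = Fix_G(C^{k-1}). Then K = [h,K] = { h g h⁻¹ g⁻¹ : g ∈ K }. -/
open SimpleGraph Set

variable {V : Type*}

/-- The `m`-neighbourhood `C^m` of a set of vertices: all vertices at distance at most
`m` from `C`. -/
def nbhd (T : SimpleGraph V) (C : Set V) (m : ℕ) : Set V :=
  {u | ∃ c ∈ C, T.dist c u ≤ m}

/-- The fibre over `x ∈ C` of the nearest-point projection onto `C`: vertices for which
`x` is a closest vertex of `C`. -/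
def fiber (T : SimpleGraph V) (C : Set V) (x : V) : Set V :=
  {u | ∀ y ∈ C, T.dist x u ≤ T.dist y u}

/-- A (finite, infinite or doubly-infinite) path in a tree, viewed as a non-empty convex
set of vertices in which every vertex has at most two neighbours. -/
def IsPath (T : SimpleGraph V) (C : Set V) : Prop :=
  IsSubtree T C ∧ ∀ v ∈ C, ∃ a b : V, {u | u ∈ C ∧ T.Adj v u} ⊆ {a, b}

/-- Property `P_k`: for every path `C`, the natural homomorphism from the pointwise
fixator of `C^{k-1}` to the product over `x ∈ C` of the permutation groups induced on
the projection fibres `π⁻¹(x)` is an isomorphism (injective and surjective). -/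
def PropertyPk (T : SimpleGraph V) (S : Set (T ≃g T)) (k : ℕ) : Prop :=
  ∀ C : Set V, IsPath T C →
    (∀ g ∈ S, ∀ g' ∈ S, Fixes g (nbhd T C (k - 1)) → Fixes g' (nbhd T C (k - 1)) →
      (∀ x ∈ C, ∀ u ∈ fiber T C x, g u = g' u) → g = g') ∧
    (∀ gf : V → T ≃g T,
      (∀ x ∈ C, gf x ∈ S ∧ Fixes (gf x) (nbhd T C (k - 1))) →
      ∃ g ∈ S, Fixes g (nbhd T C (k - 1)) ∧
        ∀ x ∈ C, ∀ u ∈ fiber T C x, g u = gf x u)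

open scoped Pointwise

/-!
Let `K` be the fixator of `C^{k-1}` in `G` and `g ∈ K`. Since `h` stabilises `C^{k-1}`, it
normalises `K`, so every `B m = (g⁻¹ h)^m h^{-m}` lies in `K`, and `g B m = h B (m-1) h⁻¹`.
Surjectivity in `P_k` gives `b ∈ K` acting as `B (n / a)` on the fibre over `c n`. As `h⁻¹` maps
the fibre over `c n` onto the one over `c (n - a)`, and `(n - a) / a = n / a - 1`, the elements
`h b h⁻¹` and `g b` of `K` agree on every fibre, so they are equal by injectivity in `P_k`, i.e.
`g = h b h⁻¹ b⁻¹`. Conversely `h b h⁻¹ b⁻¹ ∈ K` for `b ∈ K` because `h` normalises `K`.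
-/

namespace SimpleGraph.Iso

variable {W : Type*} {G : SimpleGraph V} {G' : SimpleGraph W}

lemma edist_map_le (f : G ≃g G') (u v : V) : G'.edist (f u) (f v) ≤ G.edist u v := by
  by_cases hr : G.Reachable u v
  · obtain ⟨p, hp⟩ := hr.exists_walk_length_eq_edist
    rw [← hp]
    simpa using G'.edist_le (p.map f.toHom)
  · rw [edist_eq_top_of_not_reachable hr]
    exact le_top

lemma edist_map (f : G ≃g G') (u v : V) : G'.edist (f u) (f v) = G.edist u v := by
  refine le_antisymm (f.edist_map_le u v) ?_
  simpa using f.symm.edist_map_le (f u) (f v)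

lemma dist_map_s17 (f : G ≃g G') (u v : V) : G'.dist (f u) (f v) = G.dist u v :=
  congrArg ENat.toNat (f.edist_map u v)

end SimpleGraph.Iso

section Equivariance

variable {T : SimpleGraph V}

lemma dist_inv_apply (f : T ≃g T) (x u : V) : T.dist x (f⁻¹ u) = T.dist (f x) u := by
  rw [← f.dist_map_s17 x, RelIso.apply_inv_self]

lemma smul_nbhd (f : T ≃g T) (C : Set V) (m : ℕ) : f • nbhd T C m = nbhd T (f • C) m := by
  ext u
  simp only [mem_smul_set_iff_inv_smul_mem, nbhd, mem_ofPred_eq, RelIso.smul_def]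
  conv_rhs => rw [f.surjective.exists]
  simp only [RelIso.inv_apply_self, dist_inv_apply]

lemma smul_fiber (f : T ≃g T) (C : Set V) (x : V) :
    f • fiber T C x = fiber T (f • C) (f x) := by
  ext u
  simp only [mem_smul_set_iff_inv_smul_mem, fiber, mem_ofPred_eq, RelIso.smul_def]
  conv_rhs => rw [f.surjective.forall]
  simp only [RelIso.inv_apply_self, dist_inv_apply]

end Equivariance

section Chain

variable {T : SimpleGraph V} {c : ℤ → V}

def chainWalk (hadj : ∀ n, T.Adj (c n) (c (n + 1))) (i : ℤ) :
    (n : ℕ) → T.Walk (c i) (c (i + n))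
  | 0 => Walk.nil.copy rfl (by simp)
  | n + 1 => ((chainWalk hadj i n).concat (hadj (i + n))).copy rfl
      (congrArg c (by push_cast; ring))

lemma length_chainWalk (hadj : ∀ n, T.Adj (c n) (c (n + 1))) (i : ℤ) :
    ∀ n : ℕ, (chainWalk hadj i n).length = n
  | 0 => by simp [chainWalk]
  | n + 1 => by simp [chainWalk, length_chainWalk hadj i n]

lemma support_chainWalk (hadj : ∀ n, T.Adj (c n) (c (n + 1))) (i : ℤ) :
    ∀ n : ℕ, (chainWalk hadj i n).support = (List.range (n + 1)).map fun j : ℕ ↦ c (i + j)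
  | 0 => by simp [chainWalk]
  | n + 1 => by
    rw [chainWalk, Walk.support_copy, Walk.support_concat, support_chainWalk hadj i n,
      List.range_succ (n := n + 1), List.map_append]
    simp [add_assoc]

lemma isPath_chainWalk (hinj : Function.Injective c) (hadj : ∀ n, T.Adj (c n) (c (n + 1)))
    (i : ℤ) (n : ℕ) : (chainWalk hadj i n).IsPath := by
  rw [Walk.isPath_def, support_chainWalk]
  exact List.nodup_range.map fun j j' hjj' ↦ by have := hinj hjj'; omega

namespace SimpleGraph.IsTree

lemma eq_chainWalk (hT : T.IsTree) (hinj : Function.Injective c)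
    (hadj : ∀ n, T.Adj (c n) (c (n + 1))) {i : ℤ} {n : ℕ} {p : T.Walk (c i) (c (i + n))}
    (hp : p.IsPath) : p = chainWalk hadj i n :=
  (hT.existsUnique_path _ _).unique hp (isPath_chainWalk hinj hadj i n)

lemma dist_chain_add (hT : T.IsTree) (hinj : Function.Injective c)
    (hadj : ∀ n, T.Adj (c n) (c (n + 1))) (i : ℤ) (n : ℕ) : T.dist (c i) (c (i + n)) = n := by
  obtain ⟨p, hp, hlen⟩ := hT.connected.exists_path_of_dist (c i) (c (i + n))
  rw [← hlen, hT.eq_chainWalk hinj hadj hp, length_chainWalk]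

lemma dist_chain (hT : T.IsTree) (hinj : Function.Injective c)
    (hadj : ∀ n, T.Adj (c n) (c (n + 1))) (i j : ℤ) : T.dist (c i) (c j) = (j - i).natAbs := by
  obtain ⟨n, rfl | rfl⟩ : ∃ n : ℕ, j = i + n ∨ i = j + n := ⟨(j - i).natAbs, by omega⟩
  · rw [hT.dist_chain_add hinj hadj]
    omega
  · rw [dist_comm, hT.dist_chain_add hinj hadj]
    omega

lemma mem_range_of_dist_add_dist (hT : T.IsTree) (hinj : Function.Injective c)
    (hadj : ∀ n, T.Adj (c n) (c (n + 1))) {i : ℤ} {n : ℕ} {w : V}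
    (hw : T.dist (c i) w + T.dist w (c (i + n)) = T.dist (c i) (c (i + n))) : w ∈ range c := by
  obtain ⟨p, -, hp⟩ := hT.connected.exists_path_of_dist (c i) w
  obtain ⟨q, -, hq⟩ := hT.connected.exists_path_of_dist w (c (i + n))
  have hpq : (p.append q).IsPath :=
    (p.append q).isPath_of_length_eq_dist (by rw [Walk.length_append, hp, hq, hw])
  have hw : w ∈ (p.append q).support := (p.mem_support_append_iff q).mpr (.inl p.end_mem_support)
  rw [hT.eq_chainWalk hinj hadj hpq, support_chainWalk] at hw
  obtain ⟨j, -, rfl⟩ := List.mem_map.mp hw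
  exact ⟨_, rfl⟩

lemma isPath_range (hT : T.IsTree) (hinj : Function.Injective c)
    (hadj : ∀ n, T.Adj (c n) (c (n + 1))) : IsPath T (range c) := by
  refine ⟨⟨range_nonempty c, ?_⟩, ?_⟩
  · rintro _ ⟨i, rfl⟩ _ ⟨j, rfl⟩ w hw
    obtain ⟨n, rfl | rfl⟩ : ∃ n : ℕ, j = i + n ∨ i = j + n := ⟨(j - i).natAbs, by omega⟩
    · exact hT.mem_range_of_dist_add_dist hinj hadj hw
    · refine hT.mem_range_of_dist_add_dist hinj hadj (i := j) (n := n) ?_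
      rwa [dist_comm, add_comm, dist_comm (u := w), dist_comm (u := c j)]
  · rintro _ ⟨i, rfl⟩
    refine ⟨c (i - 1), c (i + 1), ?_⟩
    rintro _ ⟨⟨j, rfl⟩, hij⟩
    have := hT.dist_chain hinj hadj i j
    rw [dist_eq_one_iff_adj.mpr hij] at this
    obtain rfl | rfl : j = i - 1 ∨ j = i + 1 := by omega
    · exact .inl rfl
    · exact .inr rfl

end SimpleGraph.IsTree

end Chain

lemma zpow_mul_zpow_neg_mem {Γ : Type*} [Group Γ] {K : Subgroup Γ} {g h : Γ} (hg : g ∈ K)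
    (hh : h ∈ Subgroup.normalizer (K : Set Γ)) (m : ℤ) : (g * h) ^ m * h ^ (-m) ∈ K := by
  have step_up (m : ℤ) : (g * h) ^ (m + 1) * h ^ (-(m + 1)) =
      g * (h * ((g * h) ^ m * h ^ (-m)) * h⁻¹) := by group
  have step_down (m : ℤ) : (g * h) ^ (m - 1) * h ^ (-(m - 1)) =
      h⁻¹ * (g⁻¹ * ((g * h) ^ m * h ^ (-m))) * h := by
    rw [show m - 1 = -1 + m by ring, zpow_add, zpow_neg_one, mul_inv_rev]
    group
  induction m using Int.induction_on with
  | zero => simp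
  | succ m ih =>
    rw [step_up]
    exact K.mul_mem hg ((Subgroup.mem_normalizer_iff.mp hh _).mp ih)
  | pred m ih =>
    rw [step_down]
    exact (Subgroup.mem_normalizer_iff''.mp hh _).mp (K.mul_mem (K.inv_mem hg) ih)

lemma smul_range_eq_of_translate {M α : Type*} [SMul M α] {h : M} {c : ℤ → α} {a : ℤ}
    (hac : ∀ n, h • c n = c (n + a)) : h • range c = range c := by
  rw [smul_set_range, funext hac]
  exact (Equiv.addRight a).surjective.range_comp c

section Fixator

variable {T : SimpleGraph V}

def fixator (G : Subgroup (T ≃g T)) (S : Set V) : Subgroup (T ≃g T) :=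
  G ⊓ fixingSubgroup (T ≃g T) S

variable {G : Subgroup (T ≃g T)} {S : Set V}

lemma mem_fixator_iff {g : T ≃g T} : g ∈ fixator G S ↔ g ∈ G ∧ Fixes g S :=
  Subgroup.mem_inf.trans (and_congr_right' (mem_fixingSubgroup_iff _))

lemma coe_fixator : (fixator G S : Set (T ≃g T)) = {g | g ∈ G ∧ Fixes g S} :=
  Set.ext fun _ ↦ mem_fixator_iff

lemma mem_normalizer_fixator {h : T ≃g T} (hh : h ∈ G) (hS : h • S = S) :
    h ∈ Subgroup.normalizer (fixator G S : Set (T ≃g T)) := by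
  have hS' : h⁻¹ • S = S := inv_smul_eq_iff.mpr hS.symm
  refine Subgroup.mem_normalizer_iff.mpr fun g ↦ ⟨fun ⟨hgG, hgS⟩ ↦ ?_, fun ⟨hgG, hgS⟩ ↦ ?_⟩
  · exact ⟨G.mul_mem (G.mul_mem hh hgG) (G.inv_mem hh), Set.conj_mem_fixingSubgroup hS hgS⟩
  · have hg : g = h⁻¹ * (h * g * h⁻¹) * h⁻¹⁻¹ := by group
    rw [hg]
    exact ⟨G.mul_mem (G.mul_mem (G.inv_mem hh) hgG) (G.inv_mem (G.inv_mem hh)),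
      Set.conj_mem_fixingSubgroup hS' hgS⟩

end Fixator

namespace PropertyPk

variable {T : SimpleGraph V} {G : Subgroup (T ≃g T)} {k : ℕ} {C : Set V}

lemma eq_of_eqOn_fiber (hPk : PropertyPk T G k) (hC : IsPath T C) {b b' : T ≃g T}
    (hb : b ∈ fixator G (nbhd T C (k - 1))) (hb' : b' ∈ fixator G (nbhd T C (k - 1)))
    (hbb' : ∀ x ∈ C, ∀ u ∈ fiber T C x, b u = b' u) : b = b' := by
  rw [mem_fixator_iff] at hb hb'
  exact (hPk C hC).1 b hb.1 b' hb'.1 hb.2 hb'.2 hbb'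

lemma exists_mem_fixator_eqOn_fiber (hPk : PropertyPk T G k) (hC : IsPath T C)
    (B : V → T ≃g T) (hB : ∀ x ∈ C, B x ∈ fixator G (nbhd T C (k - 1))) :
    ∃ b ∈ fixator G (nbhd T C (k - 1)), ∀ x ∈ C, ∀ u ∈ fiber T C x, b u = B x u := by
  obtain ⟨b, hbG, hbN, hbB⟩ := (hPk C hC).2 B fun x hx ↦ mem_fixator_iff.mp (hB x hx)
  exact ⟨b, mem_fixator_iff.mpr ⟨hbG, hbN⟩, hbB⟩

end PropertyPk

section Translation

variable {T : SimpleGraph V} {G : Subgroup (T ≃g T)} {k : ℕ} {c : ℤ → V} {h : T ≃g T} {a : ℤ}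

lemma inv_apply_mem_fiber_of_translate (hac : ∀ n, h (c n) = c (n + a)) {n : ℤ} {u : V}
    (hu : u ∈ fiber T (range c) (c n)) : h⁻¹ u ∈ fiber T (range c) (c (n - a)) := by
  have hfib : h • fiber T (range c) (c (n - a)) = fiber T (range c) (c n) := by
    rw [smul_fiber, smul_range_eq_of_translate hac, hac, sub_add_cancel]
  rw [← hfib, mem_smul_set_iff_inv_smul_mem] at hu
  exact hu

lemma exists_conj_eq_mul_of_translate (hPk : PropertyPk T G k) (hC : IsPath T (range c))
    (hinj : Function.Injective c) (ha : a ≠ 0) (hac : ∀ n, h (c n) = c (n + a))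
    (hh : h ∈ Subgroup.normalizer (fixator G (nbhd T (range c) (k - 1)) : Set (T ≃g T)))
    {g : T ≃g T} (hg : g ∈ fixator G (nbhd T (range c) (k - 1))) :
    ∃ b ∈ fixator G (nbhd T (range c) (k - 1)), h * b * h⁻¹ = g * b := by
  set B : ℤ → T ≃g T := fun m ↦ (g⁻¹ * h) ^ m * h ^ (-m)
  have hB (m : ℤ) : B m ∈ fixator G (nbhd T (range c) (k - 1)) :=
    zpow_mul_zpow_neg_mem (inv_mem hg) hh m
  have hrec (m : ℤ) : h * B (m - 1) * h⁻¹ = g * B m := by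
    simp only [B]
    rw [show m - 1 = -1 + m by ring, zpow_add, zpow_neg_one]
    group
  obtain ⟨b, hb, hbB⟩ := hPk.exists_mem_fixator_eqOn_fiber hC
    (Function.extend c (fun n ↦ B (n / a)) 1)
    (by rintro _ ⟨n, rfl⟩; rw [hinj.extend_apply]; exact hB _)
  refine ⟨b, hb, hPk.eq_of_eqOn_fiber hC ((Subgroup.mem_normalizer_iff.mp hh b).mp hb)
    (mul_mem hg hb) ?_⟩
  rintro _ ⟨n, rfl⟩ u hu
  have hdiv : (n - a) / a = n / a - 1 := by
    simpa [← sub_eq_add_neg] using Int.add_mul_ediv_right n (-1) ha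
  calc h (b (h⁻¹ u)) = (h * B (n / a - 1) * h⁻¹) u := by
        rw [hbB _ ⟨n - a, rfl⟩ _ (inv_apply_mem_fiber_of_translate hac hu), hinj.extend_apply,
          hdiv]
        rfl
    _ = g (b u) := by
        rw [hrec, hbB _ ⟨n, rfl⟩ _ hu, hinj.extend_apply]
        rfl

end Translation

theorem fixator_eq_commutator_general (T : SimpleGraph V) (hT : T.IsTree)
    (G : Subgroup (T ≃g T)) (k : ℕ)
    (hPk : PropertyPk T (G : Set (T ≃g T)) k)
    (c : ℤ → V) (hinj : Function.Injective c)
    (hadj : ∀ n : ℤ, T.Adj (c n) (c (n + 1)))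
    (h : T ≃g T) (hh : h ∈ G)
    (htrans : ∃ a : ℤ, a ≠ 0 ∧ ∀ n : ℤ, h (c n) = c (n + a)) :
    {g : T ≃g T | g ∈ G ∧ Fixes g (nbhd T (Set.range c) (k - 1))} =
      (fun g => h * g * h⁻¹ * g⁻¹) ''
        {g : T ≃g T | g ∈ G ∧ Fixes g (nbhd T (Set.range c) (k - 1))} := by
  obtain ⟨a, ha, hac⟩ := htrans
  have hC : IsPath T (range c) := hT.isPath_range hinj hadj
  have hhK : h ∈ Subgroup.normalizer (fixator G (nbhd T (range c) (k - 1)) : Set (T ≃g T)) :=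
    mem_normalizer_fixator hh (by rw [smul_nbhd, smul_range_eq_of_translate hac])
  rw [← coe_fixator]
  ext g
  constructor
  · intro hg
    obtain ⟨b, hb, hbg⟩ := exists_conj_eq_mul_of_translate hPk hC hinj ha hac hhK hg
    exact ⟨b, hb, show h * b * h⁻¹ * b⁻¹ = g by rw [hbg]; group⟩
  · rintro ⟨b, hb, rfl⟩
    exact mul_mem ((Subgroup.mem_normalizer_iff.mp hhK b).mp hb) (inv_mem hb)

/-- if `G` is closed with Property `P_k` and `h ∈ G` induces a non-trivial
translation along a doubly-infinite path `C`, then the fixator `K` of `C^{k-1}` in `G`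
satisfies `K = [h,K]`. -/
theorem fixator_eq_commutator (T : SimpleGraph V) (hT : T.IsTree)
    (hlf : ∀ v : V, (T.neighborSet v).Finite)
    (G : Subgroup (T ≃g T)) (hG : IsClosed (G : Set (T ≃g T))) (k : ℕ)
    (hPk : PropertyPk T (G : Set (T ≃g T)) k)
    (c : ℤ → V) (hinj : Function.Injective c)
    (hadj : ∀ n : ℤ, T.Adj (c n) (c (n + 1)))
    (h : T ≃g T) (hh : h ∈ G)
    (htrans : ∃ a : ℤ, a ≠ 0 ∧ ∀ n : ℤ, h (c n) = c (n + a)) :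
    {g : T ≃g T | g ∈ G ∧ Fixes g (nbhd T (Set.range c) (k - 1))} =
      (fun g => h * g * h⁻¹ * g⁻¹) ''
        {g : T ≃g T | g ∈ G ∧ Fixes g (nbhd T (Set.range c) (k - 1))} :=
  fixator_eq_commutator_general T hT G k hPk c hinj hadj h hh htrans
end
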